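/- arXiv:math/0608150 — 3 statements merged into one kernel-verified Lean document; each statement's English description precedes it below -/
import Mathlib

section
/- For all positive integers n, 2^n − 2^{⌊n/2⌋} − n·2^{⌊n/3⌋} ≤ f(n) ≤ 2^n − 2^{⌊n/2⌋}. -/
/-- `f n` is the number of relatively prime subsets of `{1,2,...,n}`, i.e. the
number of nonempty subsets `A` of `{1,...,n}` with `gcd(A) = 1`. -/
def f (n : ℕ) : ℕ :=
  ((Finset.Icc 1 n).powerset.filter (fun A => A.Nonempty ∧ A.gcd id = 1)).card

/-!
The `2 ^ n - 1` nonempty subsets of `{1, …, n}` split into the relatively prime ones and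
the rest. A subset that is not relatively prime consists of multiples of its gcd
`d ∈ [2, n]`, and there are `2 ^ ⌊n/d⌋ - 1` nonempty such subsets. Taking `d = 2` alone
bounds the rest from below; summing over all `d`, with every `d ≥ 3` contributing at most
`2 ^ ⌊n/3⌋`, bounds it from above.
-/

open Finset

lemma card_powerset_filter_nonempty {α : Type*} [DecidableEq α] (s : Finset α) :
    #{A ∈ s.powerset | A.Nonempty} = 2 ^ #s - 1 := by
  have : {A ∈ s.powerset | A.Nonempty} = s.powerset.erase ∅ := by
    ext A; simp [nonempty_iff_ne_empty, and_comm]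
  rw [this, card_erase_of_mem (empty_mem_powerset s), card_powerset]

lemma card_Icc_one_filter_dvd (n d : ℕ) : #{x ∈ Icc 1 n | d ∣ x} = n / d :=
  Nat.Ioc_filter_dvd_card_eq_div n d

lemma gcd_ne_one_of_forall_dvd {s : Finset ℕ} {d : ℕ} (hd : d ≠ 1)
    (h : ∀ a ∈ s, d ∣ a) : s.gcd id ≠ 1 :=
  fun hgcd => hd (Nat.dvd_one.mp (hgcd ▸ dvd_gcd h))

lemma gcd_mem_Icc_two {s : Finset ℕ} {n : ℕ} (hs : s ⊆ Icc 1 n) (hne : s.Nonempty)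
    (hgcd : s.gcd id ≠ 1) : s.gcd id ∈ Icc 2 n := by
  obtain ⟨a, ha⟩ := hne
  have ha' := mem_Icc.mp (hs ha)
  have hpos : 0 < s.gcd id := Nat.pos_of_dvd_of_pos (gcd_dvd ha) ha'.1
  have hle : s.gcd id ≤ a := Nat.le_of_dvd ha'.1 (gcd_dvd ha)
  exact mem_Icc.mpr ⟨by omega, by omega⟩

def nonCoprimeSubsets (n : ℕ) : Finset (Finset ℕ) :=
  {A ∈ (Icc 1 n).powerset | A.Nonempty ∧ A.gcd id ≠ 1}

lemma f_add_card_nonCoprimeSubsets (n : ℕ) : f n + #(nonCoprimeSubsets n) + 1 = 2 ^ n := by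
  have hsplit := card_filter_add_card_filter_not
    (s := {A ∈ (Icc 1 n).powerset | A.Nonempty}) (fun A => A.gcd id = 1)
  simp only [filter_filter, ← ne_eq, card_powerset_filter_nonempty, Nat.card_Icc,
    Nat.add_sub_cancel] at hsplit
  have := Nat.one_le_two_pow (n := n)
  unfold f nonCoprimeSubsets
  omega

lemma powerset_multiples_subset_nonCoprimeSubsets {n d : ℕ} (hd : d ≠ 1) :
    {A ∈ {x ∈ Icc 1 n | d ∣ x}.powerset | A.Nonempty} ⊆ nonCoprimeSubsets n := by
  intro A hA
  simp only [mem_filter, mem_powerset, subset_iff] at hA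
  refine mem_filter.mpr ⟨mem_powerset.mpr fun a ha => (hA.1 ha).1, hA.2, ?_⟩
  exact gcd_ne_one_of_forall_dvd hd fun a ha => (hA.1 ha).2

lemma nonCoprimeSubsets_subset_biUnion (n : ℕ) :
    nonCoprimeSubsets n ⊆
      (Icc 2 n).biUnion fun d => {A ∈ {x ∈ Icc 1 n | d ∣ x}.powerset | A.Nonempty} := by
  intro A hA
  simp only [nonCoprimeSubsets, mem_filter, mem_powerset] at hA
  obtain ⟨hsub, hne, hgcd⟩ := hA
  refine mem_biUnion.mpr ⟨A.gcd id, gcd_mem_Icc_two hsub hne hgcd, ?_⟩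
  exact mem_filter.mpr
    ⟨mem_powerset.mpr fun a ha => mem_filter.mpr ⟨hsub ha, gcd_dvd ha⟩, hne⟩

lemma two_pow_half_le_card_nonCoprimeSubsets (n : ℕ) :
    2 ^ (n / 2) ≤ #(nonCoprimeSubsets n) + 1 := by
  have hcard := card_le_card
    (powerset_multiples_subset_nonCoprimeSubsets (n := n) (d := 2) (by norm_num))
  rw [card_powerset_filter_nonempty, card_Icc_one_filter_dvd] at hcard
  omega

lemma card_nonCoprimeSubsets_le (n : ℕ) :
    #(nonCoprimeSubsets n) ≤ ∑ d ∈ Icc 2 n, (2 ^ (n / d) - 1) :=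
  calc #(nonCoprimeSubsets n)
      _ ≤ ∑ d ∈ Icc 2 n, #{A ∈ {x ∈ Icc 1 n | d ∣ x}.powerset | A.Nonempty} :=
        (card_le_card (nonCoprimeSubsets_subset_biUnion n)).trans card_biUnion_le
      _ = ∑ d ∈ Icc 2 n, (2 ^ (n / d) - 1) := by
        simp only [card_powerset_filter_nonempty, card_Icc_one_filter_dvd]

lemma sum_Icc_two_pow_div_le (n : ℕ) :
    ∑ d ∈ Icc 2 n, (2 ^ (n / d) - 1) + 1 ≤ 2 ^ (n / 2) + n * 2 ^ (n / 3) := by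
  have hsub : Icc 2 n ⊆ insert 2 (Icc 3 n) := fun d hd => by
    simp only [mem_Icc, mem_insert] at hd ⊢; omega
  have htail : ∑ d ∈ Icc 3 n, (2 ^ (n / d) - 1) ≤ n * 2 ^ (n / 3) :=
    calc ∑ d ∈ Icc 3 n, (2 ^ (n / d) - 1)
        _ ≤ ∑ _d ∈ Icc 3 n, 2 ^ (n / 3) := sum_le_sum fun d hd =>
          (Nat.sub_le _ _).trans (Nat.pow_le_pow_right two_pos
            (Nat.div_le_div_left (mem_Icc.mp hd).1 (by norm_num)))
        _ ≤ n * 2 ^ (n / 3) := by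
          rw [sum_const, smul_eq_mul, Nat.card_Icc]
          exact Nat.mul_le_mul_right _ (by omega)
  have hsum := sum_le_sum_of_subset (f := fun d => 2 ^ (n / d) - 1) hsub
  rw [sum_insert (by simp)] at hsum
  have := Nat.one_le_two_pow (n := n / 2)
  omega

theorem f_bounds_general (n : ℕ) :
    (2 ^ n - 2 ^ (n / 2) - n * 2 ^ (n / 3) : ℤ) ≤ (f n : ℤ) ∧
      (f n : ℤ) ≤ 2 ^ n - 2 ^ (n / 2) := by
  have hsplit := f_add_card_nonCoprimeSubsets n
  have hlower := two_pow_half_le_card_nonCoprimeSubsets n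
  have hupper :=
    (Nat.add_le_add_right (card_nonCoprimeSubsets_le n) 1).trans (sum_Icc_two_pow_div_le n)
  constructor <;> zify at hsplit hlower hupper <;> linarith

theorem f_bounds (n : ℕ) (hn : 0 < n) :
    (2 ^ n - 2 ^ (n / 2) - n * 2 ^ (n / 3) : ℤ) ≤ (f n : ℤ) ∧
      (f n : ℤ) ≤ 2 ^ n - 2 ^ (n / 2) :=
  f_bounds_general n
end

section
/- For all positive integers n and k, Φ_k(n) = ∑_{d|n} μ(d)·C(n/d, k), where the sum is over all positive divisors d of n, μ is the Möbius function, and C denotes the binomial coefficient. -/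
/-- `Phik n k` is the number of subsets `A` of `{1,2,...,n}` of cardinality `k`
such that `gcd(A)` is relatively prime to `n`. -/
def Phik (n k : ℕ) : ℕ :=
  ((Finset.Icc 1 n).powerset.filter
    (fun A => A.card = k ∧ Nat.gcd (A.gcd id) n = 1)).card

/-!
Detect coprimality with Möbius: `[gcd(m, n) = 1] = ∑_{d ∣ gcd(m, n)} μ(d)`. Applied to `m = gcd A`
and summed over the `k`-subsets `A` of `{1, …, n}`, swapping the sums leaves for each `d ∣ n` the
number of `k`-subsets all of whose elements are multiples of `d`, which is `C(n / d, k)`.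
-/

open Finset ArithmeticFunction
open scoped ArithmeticFunction.Moebius ArithmeticFunction.zeta

lemma sum_divisors_moebius (m : ℕ) :
    ∑ d ∈ m.divisors, (μ d : ℤ) = if m = 1 then 1 else 0 := by
  have h : (μ * ζ : ArithmeticFunction ℤ) m = (1 : ArithmeticFunction ℤ) m := by
    rw [moebius_mul_coe_zeta]
  rwa [coe_mul_zeta_apply, one_apply] at h

lemma sum_divisors_filter_dvd_moebius {n : ℕ} (hn : n ≠ 0) (m : ℕ) :
    ∑ d ∈ n.divisors with d ∣ m, (μ d : ℤ) = if Nat.Coprime m n then 1 else 0 := by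
  have hdivisors : {d ∈ n.divisors | d ∣ m} = (Nat.gcd m n).divisors := by
    ext d
    simp [Nat.dvd_gcd_iff, hn, and_comm]
  rw [hdivisors, sum_divisors_moebius]

lemma filter_powersetCard_forall {α : Type*} (p : α → Prop) [DecidablePred p]
    (s : Finset α) (k : ℕ) :
    {A ∈ powersetCard k s | ∀ x ∈ A, p x} = powersetCard k {x ∈ s | p x} := by
  ext A
  simp only [mem_filter, mem_powersetCard, subset_iff]
  grind

lemma card_powersetCard_Icc_filter_dvd_gcd (n d k : ℕ) :
    #{A ∈ powersetCard k (Icc 1 n) | d ∣ A.gcd id} = (n / d).choose k := by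
  simp only [Finset.dvd_gcd_iff, id]
  rw [filter_powersetCard_forall, card_powersetCard, ← Nat.Ioc_filter_dvd_card_eq_div]
  rfl

theorem Phik_eq_sum_moebius_general (n k : ℕ) (hn : 0 < n) :
    (Phik n k : ℤ) = ∑ d ∈ n.divisors,
      ArithmeticFunction.moebius d * ((n / d).choose k : ℤ) := by
  set S := powersetCard k (Icc 1 n)
  have hPhik : Phik n k = #{A ∈ S | Nat.Coprime (A.gcd id) n} := by
    simp only [Phik, S, powersetCard_eq_filter, filter_filter, Nat.coprime_iff_gcd_eq_one]
  calc (Phik n k : ℤ)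
      = ∑ A ∈ S, ∑ d ∈ n.divisors with d ∣ A.gcd id, (μ d : ℤ) := by
        rw [hPhik, card_filter, Nat.cast_sum]
        simp [sum_divisors_filter_dvd_moebius hn.ne']
    _ = ∑ d ∈ n.divisors, ∑ A ∈ S with d ∣ A.gcd id, (μ d : ℤ) := by
        simp only [sum_filter]
        exact sum_comm
    _ = ∑ d ∈ n.divisors, μ d * ((n / d).choose k : ℤ) := by
        simp [card_powersetCard_Icc_filter_dvd_gcd, mul_comm, S]

theorem Phik_eq_sum_moebius (n k : ℕ) (hn : 0 < n) (hk : 0 < k) :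
    (Phik n k : ℤ) = ∑ d ∈ n.divisors,
      ArithmeticFunction.moebius d * ((n / d).choose k : ℤ) :=
  Phik_eq_sum_moebius_general n k hn
end

section
/- For all integers n ≥ 5 and all positive integers k, f_k(n) ≥ C(n−1, k−1) + C(n−3, k−2) + 2·C(n−4, k−2), where C denotes the binomial coefficient. -/
/-!
A set containing `1` is relatively prime, and so is a set containing two coprime elements.
Hence the `k`-subsets of `{1, …, n}` containing `1` (`C(n-1, k-1)` of them), those containing
`2, 3` but not `1` (`C(n-3, k-2)`), those containing `2, 5` but not `1, 3` (`C(n-4, k-2)`) and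
those containing `3, 4` but not `1, 2` (`C(n-4, k-2)`) form four disjoint families of relatively
prime sets.
-/

/-- `fk n k` is the number of relatively prime subsets of `{1,2,...,n}` of
cardinality `k`, i.e. subsets `A` of `{1,...,n}` with `|A| = k` and `gcd(A) = 1`. -/
def fk (n k : ℕ) : ℕ :=
  ((Finset.Icc 1 n).powerset.filter (fun A => A.card = k ∧ A.gcd id = 1)).card

open Finset

section Extensions

variable {α : Type*} [DecidableEq α]

def extensions (B D : Finset α) (m : ℕ) : Finset (Finset α) :=
  (D.powersetCard m).image (B ∪ ·)

variable {B D : Finset α} {m : ℕ}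

theorem mem_extensions {A : Finset α} :
    A ∈ extensions B D m ↔ ∃ S ⊆ D, #S = m ∧ B ∪ S = A := by
  simp [extensions, mem_powersetCard, and_assoc]

theorem card_extensions (h : Disjoint B D) : #(extensions B D m) = (#D).choose m := by
  rw [extensions, card_image_of_injOn, card_powersetCard]
  intro S hS S' hS' hSS'
  have hS : Disjoint B S := h.mono_right (mem_powersetCard.1 hS).1
  have hS' : Disjoint B S' := h.mono_right (mem_powersetCard.1 hS').1
  rw [← union_sdiff_cancel_left hS, ← union_sdiff_cancel_left hS']
  exact congrArg (· \ B) hSS'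

theorem disjoint_extensions {B' D' : Finset α} {m' : ℕ} {x : α} (hB : x ∈ B)
    (hB' : x ∉ B' ∪ D') : Disjoint (extensions B D m) (extensions B' D' m') := by
  refine disjoint_left.2 fun A hA hA' => ?_
  obtain ⟨S, -, -, rfl⟩ := mem_extensions.1 hA
  obtain ⟨S', hS'D, -, hA'⟩ := mem_extensions.1 hA'
  exact hB' (union_subset_union_right hS'D (hA' ▸ mem_union_left S hB))

end Extensions

def relPrimeSubsets (n k : ℕ) : Finset (Finset ℕ) :=
  (Icc 1 n).powerset.filter (fun A => A.card = k ∧ A.gcd id = 1)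

theorem fk_eq_card_relPrimeSubsets (n k : ℕ) : fk n k = #(relPrimeSubsets n k) := rfl

theorem extensions_subset_relPrimeSubsets {n k m : ℕ} {B D : Finset ℕ} (hB : B.gcd id = 1)
    (hBD : Disjoint B D) (hBn : B ⊆ Icc 1 n) (hDn : D ⊆ Icc 1 n) (hk : #B + m = k) :
    extensions B D m ⊆ relPrimeSubsets n k := by
  intro A hA
  obtain ⟨S, hSD, rfl, rfl⟩ := mem_extensions.1 hA
  refine mem_filter.2 ⟨mem_powerset.2 (union_subset hBn (hSD.trans hDn)), ?_, ?_⟩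
  · exact (card_union_of_disjoint (hBD.mono_right hSD)).trans hk
  · exact Nat.eq_one_of_dvd_one (hB ▸ gcd_mono subset_union_left)

section Families

variable {n k : ℕ}

theorem extensions_one_subset_relPrimeSubsets (hn : 1 ≤ n) (hk : 0 < k) :
    extensions {1} (Icc 2 n) (k - 1) ⊆ relPrimeSubsets n k :=
  extensions_subset_relPrimeSubsets (by simp) (by simp) (by simpa using hn)
    (Icc_subset_Icc_left (by norm_num)) (by simp; omega)

theorem card_extensions_one : #(extensions {1} (Icc 2 n) (k - 1)) = (n - 1).choose (k - 1) := by
  rw [card_extensions (by simp), Nat.card_Icc]; congr 1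

theorem choose_add_choose_add_two_mul_choose_le_fk (hn : 5 ≤ n) (hk : 2 ≤ k) :
    (n - 1).choose (k - 1) + ((n - 3).choose (k - 2) + 2 * (n - 4).choose (k - 2)) ≤
      fk n k := by
  set G₁ := extensions {1} (Icc 2 n) (k - 1)
  set G₂ := extensions {2, 3} (Icc 4 n) (k - 2)
  set G₃ := extensions {2, 5} ((Icc 4 n).erase 5) (k - 2)
  set G₄ := extensions {3, 4} (Icc 5 n) (k - 2)
  have hG₂ : G₂ ⊆ relPrimeSubsets n k := extensions_subset_relPrimeSubsets (by decide)
    (by simp) (by intro x; simp; omega) (Icc_subset_Icc_left (by norm_num)) (by simp; omega)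
  have hG₃ : G₃ ⊆ relPrimeSubsets n k := extensions_subset_relPrimeSubsets (by decide)
    (by simp) (by intro x; simp; omega)
    ((erase_subset _ _).trans (Icc_subset_Icc_left (by norm_num))) (by simp; omega)
  have hG₄ : G₄ ⊆ relPrimeSubsets n k := extensions_subset_relPrimeSubsets (by decide)
    (by simp) (by intro x; simp; omega) (Icc_subset_Icc_left (by norm_num)) (by simp; omega)
  have hc₂ : #G₂ = (n - 3).choose (k - 2) := by
    rw [card_extensions (by simp), Nat.card_Icc]; congr 1
  have hc₃ : #G₃ = (n - 4).choose (k - 2) := by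
    rw [card_extensions (by simp), card_erase_of_mem (by simp; omega), Nat.card_Icc]; congr 1
  have hc₄ : #G₄ = (n - 4).choose (k - 2) := by
    rw [card_extensions (by simp), Nat.card_Icc]; congr 1
  have d₁ : Disjoint G₁ (G₂ ∪ G₃ ∪ G₄) := by
    simp only [disjoint_union_right]
    exact ⟨⟨disjoint_extensions (x := 1) (by simp) (by simp),
      disjoint_extensions (x := 1) (by simp) (by simp)⟩,
      disjoint_extensions (x := 1) (by simp) (by simp)⟩
  have d₂₃ : Disjoint G₂ G₃ := disjoint_extensions (x := 3) (by simp) (by simp)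
  have d₄ : Disjoint (G₂ ∪ G₃) G₄ := disjoint_union_left.2
    ⟨disjoint_extensions (x := 2) (by simp) (by simp),
      disjoint_extensions (x := 2) (by simp) (by simp)⟩
  calc _ = #G₁ + (#G₂ + #G₃ + #G₄) := by rw [card_extensions_one, hc₂, hc₃, hc₄]; ring
    _ = #(G₁ ∪ (G₂ ∪ G₃ ∪ G₄)) := by
      rw [card_union_of_disjoint d₁, card_union_of_disjoint d₄, card_union_of_disjoint d₂₃]
    _ ≤ #(relPrimeSubsets n k) := card_le_card <| union_subset
      (extensions_one_subset_relPrimeSubsets (by omega) (by omega))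
      (union_subset (union_subset hG₂ hG₃) hG₄)
    _ = fk n k := (fk_eq_card_relPrimeSubsets n k).symm

end Families

/-- For `n ≥ 5` and `k ≥ 1`,
`f_k(n) ≥ C(n-1, k-1) + C(n-3, k-2) + 2·C(n-4, k-2)`, where by convention the
binomial coefficient `C(m, k-2)` vanishes when `k = 1` (i.e. when `k - 2 = -1`). -/
theorem fk_lower_bound (n k : ℕ) (hn : 5 ≤ n) (hk : 0 < k) :
    (n - 1).choose (k - 1) +
      (if 2 ≤ k then (n - 3).choose (k - 2) + 2 * (n - 4).choose (k - 2) else 0) ≤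
      fk n k := by
  split_ifs with hk₂
  · exact choose_add_choose_add_two_mul_choose_le_fk hn hk₂
  · rw [add_zero, ← card_extensions_one, fk_eq_card_relPrimeSubsets]
    exact card_le_card (extensions_one_subset_relPrimeSubsets (by omega) hk)
end
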